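/- arXiv:2506.12172 — 2 statements merged into one kernel-verified Lean document; each statement's English description precedes it below -/
import Mathlib

section
/- Let U be a bounded open convex subset of ℝ^d. A sequence of convex functions s_n : U → ℝ converges uniformly to a convex function s : U → ℝ if and only if their Legendre–Fenchel conjugates s_n* : ℝ^d → ℝ converge uniformly to a convex function f : ℝ^d → ℝ. -/
open Filter

noncomputable section

/-- The Legendre–Fenchel conjugate of a real-valued function on a set `U ⊆ ℝ^d`:
`s*(y) = sup_{x ∈ U} (⟪x,y⟫ - s x)`. -/
def fenchelConjOn {d : ℕ} (U : Set (EuclideanSpace ℝ (Fin d)))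
    (s : EuclideanSpace ℝ (Fin d) → ℝ) (y : EuclideanSpace ℝ (Fin d)) : ℝ :=
  sSup ((fun x => (inner ℝ x y : ℝ) - s x) '' U)

/-!
Subgradients exist at every point of `U`: separate `(x, s x)` from the open convex strict
epigraph of `s`. Hence a convex `s` on the bounded open set `U` has an affine minorant, so `s*` is
finite, and a subgradient `y` at `x ∈ U` attains the supremum defining `s**(x)`, so `s** = s` on
`U`. Conjugation is 1-Lipschitz for the sup norm (`s ≤ t + ε` gives `t* ≤ s* + ε`), and suprema of
affine functions are convex. Thus `s_n → s` gives `s_n* → s*`, and `s_n* → f` gives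
`s_n = s_n** → f*` on `U`.
-/

open Set
open scoped RealInnerProductSpace

theorem ContinuousOn.isOpen_strict_epigraph {α β : Type*} [TopologicalSpace α]
    [TopologicalSpace β] [LinearOrder β] [OrderClosedTopology β] {U : Set α} {f : α → β}
    (hf : ContinuousOn f U) (hU : IsOpen U) :
    IsOpen {p : α × β | p.1 ∈ U ∧ f p.1 < p.2} :=
  ((hf.comp continuousOn_fst fun _ hp => hp).prodMk continuousOn_snd).isOpen_inter_preimage
    (hU.preimage continuous_fst) (isOpen_lt continuous_fst continuous_snd)

theorem ConvexOn.exists_strongDual_subgradient {E : Type*} [NormedAddCommGroup E]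
    [NormedSpace ℝ E] {U : Set E} {s : E → ℝ} (hs : ConvexOn ℝ U s) (hcont : ContinuousOn s U)
    (hU : IsOpen U) {x : E} (hx : x ∈ U) :
    ∃ g : StrongDual ℝ E, ∀ z ∈ U, s x + g (z - x) ≤ s z := by
  obtain ⟨φ, hφ⟩ := geometric_hahn_banach_open_point hs.convex_strict_epigraph
    (hcont.isOpen_strict_epigraph hU) (x := (x, s x)) fun h => lt_irrefl _ h.2
  set L := φ.comp (ContinuousLinearMap.inl ℝ E ℝ)
  set a := φ (0, 1)
  have hφ_apply : ∀ z t, φ (z, t) = L z + t * a := fun z t => by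
    have : ((z, t) : E × ℝ) = (z, 0) + t • (0, 1) := by simp
    rw [this, map_add, map_smul, smul_eq_mul, mul_comm]
    rfl
  have hφ_lt : ∀ z ∈ U, ∀ t, s z < t → L z + t * a < L x + s x * a := fun z hz t ht => by
    simpa only [hφ_apply] using hφ (z, t) ⟨hz, ht⟩
  have ha : a < 0 := by
    have := hφ_lt x hx (s x + 1) (by linarith)
    linarith
  -- The separating hyperplane is not vertical, so letting `t ↓ s z` gives a supporting one.
  have hsupp : ∀ z ∈ U, L z - L x ≤ (s z - s x) * -a := fun z hz => by
    refine le_of_forall_pos_lt_add fun δ hδ => ?_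
    have := hφ_lt z hz (s z + δ / -a) (by linarith [show 0 < δ / -a by bound])
    have : δ / -a * a = -δ := by field_simp [ha.ne]
    linarith
  refine ⟨(-a)⁻¹ • L, fun z hz => ?_⟩
  have := (inv_mul_le_iff₀ (neg_pos.2 ha)).2 (by linarith [hsupp z hz] :
    L z - L x ≤ -a * (s z - s x))
  simp only [smul_apply, map_sub, smul_eq_mul]
  linarith

theorem ConvexOn.exists_inner_subgradient {E : Type*} [NormedAddCommGroup E]
    [InnerProductSpace ℝ E] [FiniteDimensional ℝ E] {U : Set E} {s : E → ℝ}
    (hs : ConvexOn ℝ U s) (hU : IsOpen U) {x : E} (hx : x ∈ U) :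
    ∃ y : E, ∀ z ∈ U, s x + ⟪z - x, y⟫ ≤ s z := by
  obtain ⟨g, hg⟩ := hs.exists_strongDual_subgradient (hs.continuousOn hU) hU hx
  refine ⟨(InnerProductSpace.toDual ℝ E).symm g, fun z hz => ?_⟩
  rw [real_inner_comm, InnerProductSpace.toDual_symm_apply]
  exact hg z hz

section FenchelConjugate

variable {d : ℕ} {V W : Set (EuclideanSpace ℝ (Fin d))} {g h : EuclideanSpace ℝ (Fin d) → ℝ}
  {x y : EuclideanSpace ℝ (Fin d)}

theorem inner_sub_le_fenchelConjOn (hbdd : BddAbove ((fun x => ⟪x, y⟫ - g x) '' V))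
    (hx : x ∈ V) : ⟪x, y⟫ - g x ≤ fenchelConjOn V g y :=
  le_csSup hbdd ⟨x, hx, rfl⟩

theorem inner_sub_fenchelConjOn_le (hbdd : BddAbove ((fun x => ⟪x, y⟫ - g x) '' V))
    (hx : x ∈ V) : ⟪y, x⟫ - fenchelConjOn V g y ≤ g x := by
  have := inner_sub_le_fenchelConjOn hbdd hx
  rw [real_inner_comm] at this
  linarith

theorem fenchelConjOn_eq_of_subgradient (hx : x ∈ V) (hy : ∀ z ∈ V, g x + ⟪z - x, y⟫ ≤ g z) :
    fenchelConjOn V g y = ⟪x, y⟫ - g x := by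
  refine IsGreatest.csSup_eq ⟨⟨x, hx, rfl⟩, ?_⟩
  rintro _ ⟨z, hz, rfl⟩
  have := hy z hz
  rw [inner_sub_left] at this
  dsimp only
  linarith

theorem bddAbove_image_inner_sub_of_le_add {c : ℝ}
    (hbdd : BddAbove ((fun x => ⟪x, y⟫ - h x) '' V)) (hgh : ∀ x ∈ V, h x ≤ g x + c) :
    BddAbove ((fun x => ⟪x, y⟫ - g x) '' V) := by
  obtain ⟨C, hC⟩ := hbdd
  refine ⟨C + c, ?_⟩
  rintro _ ⟨x, hx, rfl⟩
  have := hC ⟨x, hx, rfl⟩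
  dsimp only at this ⊢
  linarith [hgh x hx]

theorem fenchelConjOn_le_add_of_le_add {c : ℝ} (hV : V.Nonempty)
    (hbdd : BddAbove ((fun x => ⟪x, y⟫ - g x) '' V)) (hgh : ∀ x ∈ V, g x ≤ h x + c) :
    fenchelConjOn V h y ≤ fenchelConjOn V g y + c := by
  refine csSup_le (hV.image _) ?_
  rintro _ ⟨x, hx, rfl⟩
  linarith [hgh x hx, inner_sub_le_fenchelConjOn hbdd hx]

theorem dist_fenchelConjOn_le {ε : ℝ} (hV : V.Nonempty)
    (hbdd : BddAbove ((fun x => ⟪x, y⟫ - g x) '' V)) (hgh : ∀ x ∈ V, dist (g x) (h x) ≤ ε) :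
    dist (fenchelConjOn V g y) (fenchelConjOn V h y) ≤ ε := by
  have hle : ∀ x ∈ V, g x ≤ h x + ε ∧ h x ≤ g x + ε := fun x hx => by
    have := abs_le.1 ((Real.dist_eq _ _).symm ▸ hgh x hx)
    constructor <;> linarith
  have hbdd' := bddAbove_image_inner_sub_of_le_add hbdd fun x hx => (hle x hx).1
  rw [Real.dist_eq, abs_le]
  constructor
  · linarith [fenchelConjOn_le_add_of_le_add hV hbdd fun x hx => (hle x hx).1]
  · linarith [fenchelConjOn_le_add_of_le_add hV hbdd' fun x hx => (hle x hx).2]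

theorem convexOn_fenchelConjOn (hV : V.Nonempty) (hW : Convex ℝ W)
    (hbdd : ∀ y ∈ W, BddAbove ((fun x => ⟪x, y⟫ - g x) '' V)) :
    ConvexOn ℝ W (fenchelConjOn V g) := by
  refine ⟨hW, fun y₁ hy₁ y₂ hy₂ a b ha hb hab => csSup_le (hV.image _) ?_⟩
  rintro _ ⟨x, hx, rfl⟩
  have h₁ := mul_le_mul_of_nonneg_left (inner_sub_le_fenchelConjOn (hbdd y₁ hy₁) hx) ha
  have h₂ := mul_le_mul_of_nonneg_left (inner_sub_le_fenchelConjOn (hbdd y₂ hy₂) hx) hb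
  simp only [inner_add_right, real_inner_smul_right, smul_eq_mul]
  linear_combination h₁ + h₂ + g x * hab

theorem TendstoUniformlyOn.bddAbove_image_inner_sub {ι : Type*} {l : Filter ι} [l.NeBot]
    {F : ι → EuclideanSpace ℝ (Fin d) → ℝ} (hF : TendstoUniformlyOn F g l V)
    (hbdd : ∀ᶠ n in l, BddAbove ((fun x => ⟪x, y⟫ - F n x) '' V)) :
    BddAbove ((fun x => ⟪x, y⟫ - g x) '' V) := by
  obtain ⟨n, hn, hbddn⟩ :=
    ((Metric.tendstoUniformlyOn_iff.1 hF) 1 one_pos |>.and hbdd).exists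
  refine bddAbove_image_inner_sub_of_le_add (c := 1) hbddn fun x hx => ?_
  linarith [(abs_lt.1 ((Real.dist_eq _ _) ▸ hn x hx)).1]

theorem TendstoUniformlyOn.fenchelConjOn {ι : Type*} {l : Filter ι}
    {F : ι → EuclideanSpace ℝ (Fin d) → ℝ} (hF : TendstoUniformlyOn F g l V) (hV : V.Nonempty)
    (hbdd : ∀ y ∈ W, BddAbove ((fun x => ⟪x, y⟫ - g x) '' V)) :
    TendstoUniformlyOn (fun n => fenchelConjOn V (F n)) (fenchelConjOn V g) l W := by
  refine Metric.tendstoUniformlyOn_iff.2 fun ε hε => ?_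
  filter_upwards [Metric.tendstoUniformlyOn_iff.1 hF (ε / 2) (half_pos hε)] with n hn y hy
  exact (dist_fenchelConjOn_le hV (hbdd y hy) fun x hx => (hn x hx).le).trans_lt
    (half_lt_self hε)

theorem bddAbove_image_inner_sub (hVb : Bornology.IsBounded V) (hVo : IsOpen V)
    (hg : ConvexOn ℝ V g) (y : EuclideanSpace ℝ (Fin d)) :
    BddAbove ((fun x => ⟪x, y⟫ - g x) '' V) := by
  rcases V.eq_empty_or_nonempty with rfl | ⟨x₀, hx₀⟩
  · simp
  obtain ⟨w, hw⟩ := hg.exists_inner_subgradient hVo hx₀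
  obtain ⟨R, hR⟩ := isBounded_iff_forall_norm_le.1 hVb
  refine ⟨R * ‖y - w‖ + ⟪x₀, w⟫ - g x₀, ?_⟩
  rintro _ ⟨x, hx, rfl⟩
  have hCS : ⟪x, y - w⟫ ≤ R * ‖y - w‖ :=
    (real_inner_le_norm x (y - w)).trans (by gcongr; exact hR x hx)
  rw [inner_sub_right] at hCS
  have := hw x hx
  rw [inner_sub_left] at this
  dsimp only
  linarith

theorem bddAbove_image_inner_sub_fenchelConjOn
    (hbdd : ∀ y, BddAbove ((fun x => ⟪x, y⟫ - g x) '' V)) (hx : x ∈ V) :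
    BddAbove ((fun y => ⟪y, x⟫ - fenchelConjOn V g y) '' univ) :=
  ⟨g x, by rintro _ ⟨y, -, rfl⟩; exact inner_sub_fenchelConjOn_le (hbdd y) hx⟩

theorem fenchelConjOn_univ_fenchelConjOn (hVb : Bornology.IsBounded V) (hVo : IsOpen V)
    (hg : ConvexOn ℝ V g) (hx : x ∈ V) :
    fenchelConjOn univ (fenchelConjOn V g) x = g x := by
  have hbdd := bddAbove_image_inner_sub hVb hVo hg
  obtain ⟨y₀, hy₀⟩ := hg.exists_inner_subgradient hVo hx
  refine le_antisymm (csSup_le (univ_nonempty.image _) ?_) ?_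
  · rintro _ ⟨y, -, rfl⟩
    exact inner_sub_fenchelConjOn_le (hbdd y) hx
  · calc g x = ⟪y₀, x⟫ - fenchelConjOn V g y₀ := by
          rw [fenchelConjOn_eq_of_subgradient hx hy₀, real_inner_comm]; ring
      _ ≤ fenchelConjOn univ (fenchelConjOn V g) x :=
          inner_sub_le_fenchelConjOn (bddAbove_image_inner_sub_fenchelConjOn hbdd hx) (mem_univ _)

end FenchelConjugate

theorem uniform_convergence_iff_conjugates_uniformly_converge_general {d : ℕ}
    (U : Set (EuclideanSpace ℝ (Fin d)))
    (hUb : Bornology.IsBounded U) (hUo : IsOpen U) (hUne : U.Nonempty)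
    (sn : ℕ → EuclideanSpace ℝ (Fin d) → ℝ)
    (hsn : ∀ n, ConvexOn ℝ U (sn n)) :
    (∃ s : EuclideanSpace ℝ (Fin d) → ℝ, ConvexOn ℝ U s ∧
        TendstoUniformlyOn sn s atTop U) ↔
    (∃ f : EuclideanSpace ℝ (Fin d) → ℝ, ConvexOn ℝ Set.univ f ∧
        TendstoUniformly (fun n => fenchelConjOn U (sn n)) f atTop) := by
  constructor
  · rintro ⟨s, hs, hlim⟩
    have hbdd := bddAbove_image_inner_sub hUb hUo hs
    exact ⟨fenchelConjOn U s, convexOn_fenchelConjOn hUne convex_univ fun y _ => hbdd y,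
      tendstoUniformlyOn_univ.1 (hlim.fenchelConjOn hUne fun y _ => hbdd y)⟩
  · rintro ⟨f, -, hlim⟩
    rw [← tendstoUniformlyOn_univ] at hlim
    have hbdd : ∀ x ∈ U, BddAbove ((fun y => ⟪y, x⟫ - f y) '' univ) := fun x hx =>
      hlim.bddAbove_image_inner_sub <| .of_forall fun n =>
        bddAbove_image_inner_sub_fenchelConjOn (bddAbove_image_inner_sub hUb hUo (hsn n)) hx
    refine ⟨fenchelConjOn univ f, convexOn_fenchelConjOn univ_nonempty (hsn 0).1 hbdd,
      (hlim.fenchelConjOn univ_nonempty hbdd).congr <| .of_forall fun n x hx => ?_⟩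
    exact fenchelConjOn_univ_fenchelConjOn hUb hUo (hsn n) hx

/-- Let `U` be a bounded open convex subset of `ℝ^d`. A sequence of convex
functions `s_n : U → ℝ` converges uniformly on `U` to a convex function `s : U → ℝ` if and only
if their Legendre–Fenchel conjugates `s_n* : ℝ^d → ℝ` converge uniformly on `ℝ^d` to a convex
function `f : ℝ^d → ℝ`. -/
theorem uniform_convergence_iff_conjugates_uniformly_converge {d : ℕ}
    (U : Set (EuclideanSpace ℝ (Fin d)))
    (hUb : Bornology.IsBounded U) (hUo : IsOpen U) (hUc : Convex ℝ U) (hUne : U.Nonempty)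
    (sn : ℕ → EuclideanSpace ℝ (Fin d) → ℝ)
    (hsn : ∀ n, ConvexOn ℝ U (sn n)) :
    (∃ s : EuclideanSpace ℝ (Fin d) → ℝ, ConvexOn ℝ U s ∧
        TendstoUniformlyOn sn s atTop U) ↔
    (∃ f : EuclideanSpace ℝ (Fin d) → ℝ, ConvexOn ℝ Set.univ f ∧
        TendstoUniformly (fun n => fenchelConjOn U (sn n)) f atTop) :=
  uniform_convergence_iff_conjugates_uniformly_converge_general U hUb hUo hUne sn hsn
end
end

section
/- In the affine spacetime (ℝ^{d+1}, C) with pseudo-Finsler norm F(v,ν) = −ν·w(v/ν) on causal vectors (w : Ω → ℝ the convex radial parametrization of Σ), given X₀ and X₁ ∈ X₀ + cl(C), every future-directed C-causal curve from X₀ to X₁ has F-length at most F(X₁ − X₀); i.e., the C-distance ρ(X₀, X₁) is attained by the straight segment. -/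
open MeasureTheory

noncomputable section

set_option maxHeartbeats 1000000

section Helpers
open Set

theorem integral_le_sub_of_finset_exceptions
    (S : Finset ℝ) :
    ∀ (g g' φ : ℝ → ℝ) (a b : ℝ), a ≤ b → ContinuousOn g (Icc a b) →
    (∀ x ∈ Ioo a b \ (S : Set ℝ), HasDerivAt g (g' x) x) →
    IntegrableOn φ (Icc a b) →
    (∀ x ∈ Ioo a b \ (S : Set ℝ), φ x ≤ g' x) →
    (∫ y in a..b, φ y) ≤ g b - g a := by
  induction S using Finset.induction_on with
  | empty =>
    intro g g' φ a b hab hcont hderiv hint hle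
    exact intervalIntegral.integral_le_sub_of_hasDeriv_right_of_le hab hcont
      (fun x hx => ((hderiv x ⟨hx, by simp⟩).hasDerivWithinAt))
      hint (fun x hx => hle x ⟨hx, by simp⟩)
  | @insert c S' hc IH =>
    intro g g' φ a b hab hcont hderiv hint hle
    have hmem : ∀ x, x ∈ Ioo a b → x ≠ c → x ∉ (S' : Set ℝ) →
        x ∈ Ioo a b \ ((insert c S' : Finset ℝ) : Set ℝ) := by
      intro x hx hne hns
      refine ⟨hx, ?_⟩
      simp only [Finset.coe_insert, Set.mem_insert_iff, Finset.mem_coe, not_or]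
      exact ⟨hne, fun h => hns h⟩
    by_cases hcab : c ∈ Ioo a b
    · have h1 : (∫ y in a..c, φ y) ≤ g c - g a := by
        refine IH g g' φ a c hcab.1.le (hcont.mono (Icc_subset_Icc le_rfl hcab.2.le)) ?_
          (hint.mono_set (Icc_subset_Icc le_rfl hcab.2.le)) ?_
        · intro x hx
          exact hderiv x (hmem x ⟨hx.1.1, hx.1.2.trans hcab.2⟩ hx.1.2.ne hx.2)
        · intro x hx
          exact hle x (hmem x ⟨hx.1.1, hx.1.2.trans hcab.2⟩ hx.1.2.ne hx.2)
      have h2 : (∫ y in c..b, φ y) ≤ g b - g c := by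
        refine IH g g' φ c b hcab.2.le (hcont.mono (Icc_subset_Icc hcab.1.le le_rfl)) ?_
          (hint.mono_set (Icc_subset_Icc hcab.1.le le_rfl)) ?_
        · intro x hx
          exact hderiv x (hmem x ⟨hcab.1.trans hx.1.1, hx.1.2⟩ hx.1.1.ne' hx.2)
        · intro x hx
          exact hle x (hmem x ⟨hcab.1.trans hx.1.1, hx.1.2⟩ hx.1.1.ne' hx.2)
      have hsplit : (∫ y in a..b, φ y) = (∫ y in a..c, φ y) + ∫ y in c..b, φ y := by
        refine (intervalIntegral.integral_add_adjacent_intervals ?_ ?_).symm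
        · exact (intervalIntegrable_iff_integrableOn_Icc_of_le hcab.1.le).2
            (hint.mono_set (Icc_subset_Icc le_rfl hcab.2.le))
        · exact (intervalIntegrable_iff_integrableOn_Icc_of_le hcab.2.le).2
            (hint.mono_set (Icc_subset_Icc hcab.1.le le_rfl))
      rw [hsplit]; linarith
    · refine IH g g' φ a b hab hcont ?_ hint ?_
      · intro x hx
        exact hderiv x (hmem x hx.1 (fun h => hcab (h ▸ hx.1)) hx.2)
      · intro x hx
        exact hle x (hmem x hx.1 (fun h => hcab (h ▸ hx.1)) hx.2)

theorem integral_le_sub_of_finite_exceptions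
    {S : Set ℝ} (hS : S.Finite) (g g' φ : ℝ → ℝ) (a b : ℝ) (hab : a ≤ b)
    (hcont : ContinuousOn g (Icc a b))
    (hderiv : ∀ x ∈ Ioo a b \ S, HasDerivAt g (g' x) x)
    (hint : IntegrableOn φ (Icc a b))
    (hle : ∀ x ∈ Ioo a b \ S, φ x ≤ g' x) :
    (∫ y in a..b, φ y) ≤ g b - g a := by
  refine integral_le_sub_of_finset_exceptions hS.toFinset g g' φ a b hab hcont ?_ hint ?_
  · intro x hx; exact hderiv x ⟨hx.1, by simpa using hx.2⟩
  · intro x hx; exact hle x ⟨hx.1, by simpa using hx.2⟩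

theorem le_on_closure_of_le {d : ℕ} {Ω : Set (EuclideanSpace ℝ (Fin d))}
    {w h : EuclideanSpace ℝ (Fin d) → ℝ}
    (hwcont : ContinuousOn w (closure Ω)) (hh : Continuous h)
    (hle : ∀ x ∈ Ω, h x ≤ w x) :
    ∀ x ∈ closure Ω, h x ≤ w x := by
  intro y hy
  obtain ⟨u, hu, hlim⟩ := mem_closure_iff_seq_limit.1 hy
  have htendw : Filter.Tendsto (fun n => w (u n)) Filter.atTop (nhds (w y)) := by
    have hcw : ContinuousWithinAt w (closure Ω) y := hwcont y hy
    refine hcw.tendsto.comp ?_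
    rw [tendsto_nhdsWithin_iff]
    exact ⟨hlim, Filter.Eventually.of_forall fun n => subset_closure (hu n)⟩
  have htendh : Filter.Tendsto (fun n => h (u n)) Filter.atTop (nhds (h y)) :=
    (hh.tendsto y).comp hlim
  exact le_of_tendsto_of_tendsto' htendh htendw fun n => hle (u n) (hu n)

theorem exists_subgradient {d : ℕ} {Ω : Set (EuclideanSpace ℝ (Fin d))}
    (hΩo : IsOpen Ω) (hΩc : Convex ℝ Ω)
    {w : EuclideanSpace ℝ (Fin d) → ℝ}
    (hwcont : ContinuousOn w (closure Ω)) (hwconv : ConvexOn ℝ (closure Ω) w)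
    {x₀ : EuclideanSpace ℝ (Fin d)} (hx₀ : x₀ ∈ Ω) :
    ∃ g : EuclideanSpace ℝ (Fin d) →L[ℝ] ℝ,
      ∀ x ∈ closure Ω, w x₀ + (g x - g x₀) ≤ w x := by
  classical
  set U : Set (EuclideanSpace ℝ (Fin d) × ℝ) := {p | p.1 ∈ Ω ∧ w p.1 < p.2} with hU
  have hwc : ∀ x ∈ Ω, ContinuousAt w x := fun x hx =>
    (hwcont.mono subset_closure).continuousAt (hΩo.mem_nhds hx)
  have hUopen : IsOpen U := by
    rw [isOpen_iff_mem_nhds]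
    rintro p ⟨hp1, hp2⟩
    have h1 : {q : EuclideanSpace ℝ (Fin d) × ℝ | q.1 ∈ Ω} ∈ nhds p :=
      (hΩo.preimage continuous_fst).mem_nhds hp1
    have hcont : ContinuousAt (fun q : EuclideanSpace ℝ (Fin d) × ℝ => q.2 - w q.1) p := by
      exact continuousAt_snd.sub ((hwc p.1 hp1).comp continuousAt_fst)
    have h2 : {q : EuclideanSpace ℝ (Fin d) × ℝ | 0 < q.2 - w q.1} ∈ nhds p :=
      hcont.tendsto (lt_mem_nhds (by linarith))
    filter_upwards [h1, h2] with q hq1 hq2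
    exact ⟨hq1, by simpa [sub_pos] using hq2⟩
  have hUconv : Convex ℝ U := by
    rintro p ⟨hp1, hp2⟩ q ⟨hq1, hq2⟩ a b ha hb hab
    refine ⟨hΩc hp1 hq1 ha hb hab, ?_⟩
    have hw := hwconv.2 (subset_closure hp1) (subset_closure hq1) ha hb hab
    have : a * w p.1 + b * w q.1 < a * p.2 + b * q.2 := by
      rcases ha.lt_or_eq with ha' | ha'
      · have h1 : a * w p.1 < a * p.2 := by exact (mul_lt_mul_iff_right₀ ha').2 hp2
        have h2 : b * w q.1 ≤ b * q.2 := mul_le_mul_of_nonneg_left hq2.le hb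
        linarith
      · have hb1 : b = 1 := by linarith
        simp only [← ha', hb1] at *
        simpa using hq2
    calc w (a • p.1 + b • q.1) ≤ a • w p.1 + b • w q.1 := hw
      _ < a * p.2 + b * q.2 := by simpa [smul_eq_mul] using this
      _ = (a • p + b • q).2 := by simp [smul_eq_mul]
  have hz : (x₀, w x₀) ∉ U := fun h => lt_irrefl _ h.2
  obtain ⟨f, hf⟩ := geometric_hahn_banach_open_point hUconv hUopen hz
  set g₀ : EuclideanSpace ℝ (Fin d) →L[ℝ] ℝ :=
    f.comp (ContinuousLinearMap.inl ℝ (EuclideanSpace ℝ (Fin d)) ℝ) with hg₀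
  set β : ℝ := f (0, 1) with hβ
  have hsplit : ∀ (x : EuclideanSpace ℝ (Fin d)) (r : ℝ), f (x, r) = g₀ x + r * β := by
    intro x r
    have h1 : (x, r) = (x, (0:ℝ)) + r • ((0 : EuclideanSpace ℝ (Fin d)), (1:ℝ)) := by
      simp [Prod.ext_iff]
    rw [h1, f.map_add, f.map_smul, smul_eq_mul]
    rfl
  have hβneg : β < 0 := by
    have h1 := hf (x₀, w x₀ + 1) ⟨hx₀, show w x₀ < w x₀ + 1 by linarith⟩
    rw [hsplit, hsplit] at h1
    linarith
  have hβ' : (0:ℝ) < -β := by linarith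
  have hβne : (-β) ≠ 0 := ne_of_gt hβ'
  have hineq : ∀ x ∈ Ω, g₀ x + w x * β ≤ g₀ x₀ + w x₀ * β := by
    intro x hx
    have key : ∀ ε > (0:ℝ), g₀ x + (w x + ε) * β < g₀ x₀ + w x₀ * β := by
      intro ε hε
      have h2 := hf (x, w x + ε) ⟨hx, show w x < w x + ε by linarith⟩
      rw [hsplit, hsplit] at h2
      exact h2
    by_contra hcon
    push_neg at hcon
    set D := g₀ x + w x * β - (g₀ x₀ + w x₀ * β) with hD
    have hDpos : 0 < D := by simp only [hD]; linarith
    set ε := D / (-β) with hε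
    have hεpos : 0 < ε := div_pos hDpos hβ'
    have h5 : ε * (-β) = D := div_mul_cancel₀ D hβne
    have h6 : ε * β = -D := by rw [← h5]; ring
    have h7 := key ε hεpos
    have h8 : g₀ x + (w x + ε) * β = (g₀ x + w x * β) + ε * β := by ring
    rw [h8, h6] at h7
    simp only [hD] at h7
    linarith
  refine ⟨(-β)⁻¹ • g₀, ?_⟩
  have happ : ∀ y : EuclideanSpace ℝ (Fin d),
      ((-β)⁻¹ • g₀) y = (-β)⁻¹ * g₀ y := fun y => rfl
  refine le_on_closure_of_le hwcont
    (continuous_const.add ((((-β)⁻¹ • g₀).continuous).sub continuous_const)) ?_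
  intro x hx
  have h1 := hineq x hx
  rw [happ, happ]
  have h3 : (-β)⁻¹ * g₀ x - (-β)⁻¹ * g₀ x₀ = (g₀ x - g₀ x₀) / (-β) := by
    rw [div_eq_inv_mul, mul_sub]
  rw [h3]
  have h4 : (g₀ x - g₀ x₀) / -β ≤ w x - w x₀ := by
    rw [div_le_iff₀ hβ']
    nlinarith
  linarith

end Helpers


/-- The open cone over a convex body `Ω ⊂ ℝ^d` placed at height `1`. -/
def coneOver {d : ℕ} (Ω : Set (EuclideanSpace ℝ (Fin d))) :
    Set (EuclideanSpace ℝ (Fin d) × ℝ) :=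
  {p | ∃ x ∈ Ω, ∃ t : ℝ, 0 < t ∧ p = t • (x, (1 : ℝ))}

/-- The pseudo-Finsler norm `F(v,ν) = −ν·w(v/ν)` on causal vectors, where `w` is the convex
radial parametrization of the gauge surface `Σ`. -/
def finslerF {d : ℕ} (w : EuclideanSpace ℝ (Fin d) → ℝ)
    (V : EuclideanSpace ℝ (Fin d) × ℝ) : ℝ :=
  -V.2 * w (V.2⁻¹ • V.1)

theorem mem_closure_coneOver {d : ℕ} {Ω : Set (EuclideanSpace ℝ (Fin d))}
    (hΩb : Bornology.IsBounded Ω) {V : EuclideanSpace ℝ (Fin d) × ℝ}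
    (hV : V ∈ closure (coneOver Ω)) :
    0 ≤ V.2 ∧ (V.2 = 0 → V = 0) ∧ (0 < V.2 → V.2⁻¹ • V.1 ∈ closure Ω) := by
  obtain ⟨R, hR⟩ := isBounded_iff_forall_norm_le.1 hΩb
  have hK : closure (coneOver Ω) ⊆ {p : EuclideanSpace ℝ (Fin d) × ℝ |
      0 ≤ p.2 ∧ ‖p.1‖ ≤ R * p.2} := by
    refine closure_minimal ?_ ?_
    · rintro p ⟨x, hx, t, ht, rfl⟩
      simp only [Set.mem_setOf_eq, Prod.smul_mk, smul_eq_mul, mul_one]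
      refine ⟨ht.le, ?_⟩
      rw [norm_smul, Real.norm_eq_abs, abs_of_pos ht, mul_comm R t]
      exact mul_le_mul_of_nonneg_left (hR x hx) ht.le
    · have h1 : IsClosed {p : EuclideanSpace ℝ (Fin d) × ℝ | 0 ≤ p.2} :=
        isClosed_le continuous_const continuous_snd
      have h2 : IsClosed {p : EuclideanSpace ℝ (Fin d) × ℝ | ‖p.1‖ ≤ R * p.2} :=
        isClosed_le (continuous_fst.norm) (continuous_const.mul continuous_snd)
      exact h1.inter h2
  have hKV := hK hV
  refine ⟨hKV.1, ?_, ?_⟩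
  · intro h0
    have h1 : ‖V.1‖ ≤ 0 := by simpa [h0] using hKV.2
    have h2 : V.1 = 0 := by simpa using le_antisymm h1 (norm_nonneg _)
    exact Prod.ext h2 h0
  · intro h2
    obtain ⟨u, hu, hlim⟩ := mem_closure_iff_seq_limit.1 hV
    have hcontAt : ContinuousAt (fun p : EuclideanSpace ℝ (Fin d) × ℝ => p.2⁻¹ • p.1) V :=
      (continuousAt_snd.inv₀ h2.ne').smul continuousAt_fst
    have htend := hcontAt.tendsto.comp hlim
    refine mem_closure_of_tendsto htend (Filter.Eventually.of_forall ?_)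
    intro n
    obtain ⟨x, hx, t, ht, hEq⟩ := hu n
    have hux : (u n).2⁻¹ • (u n).1 = x := by
      rw [hEq]
      simp only [Prod.smul_mk, smul_eq_mul, mul_one]
      rw [smul_smul, inv_mul_cancel₀ ht.ne', one_smul]
    simpa [Function.comp, hux] using hx

/-- In the affine spacetime `(ℝ^{d+1}, C)` with pseudo-Finsler norm
`F(v,ν) = −ν w(v/ν)`, given `X₀` and `X₁ ∈ X₀ + cl C`, every future-directed `C`-causal
(piecewise `C¹`) curve from `X₀` to `X₁` has `F`-length at most `F(X₁ − X₀)`: the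
`C`-distance is attained by the straight segment. -/
theorem causal_curve_length_le_straight {d : ℕ}
    (Ω : Set (EuclideanSpace ℝ (Fin d)))
    (hΩb : Bornology.IsBounded Ω) (hΩo : IsOpen Ω) (hΩc : Convex ℝ Ω)
    (hΩ0 : (0 : EuclideanSpace ℝ (Fin d)) ∈ Ω)
    (w : EuclideanSpace ℝ (Fin d) → ℝ)
    (hwcont : ContinuousOn w (closure Ω)) (hwconv : ConvexOn ℝ (closure Ω) w)
    (hwneg : ∀ x ∈ Ω, w x < 0) (hw0 : ∀ x ∈ frontier Ω, w x = 0)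
    (X₀ X₁ : EuclideanSpace ℝ (Fin d) × ℝ)
    (hX : X₁ - X₀ ∈ closure (coneOver Ω))
    (γ γ' : ℝ → EuclideanSpace ℝ (Fin d) × ℝ)
    (S : Set ℝ) (hS : S.Finite)
    (hγcont : ContinuousOn γ (Set.Icc 0 1))
    (hγder : ∀ t ∈ Set.Ioo (0 : ℝ) 1 \ S, HasDerivAt γ (γ' t) t)
    (hγcausal : ∀ t ∈ Set.Ioo (0 : ℝ) 1 \ S, γ' t ∈ closure (coneOver Ω))
    (hγ0 : γ 0 = X₀) (hγ1 : γ 1 = X₁)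
    (hint : IntervalIntegrable (fun t => finslerF w (γ' t)) volume 0 1) :
    ∫ t in (0 : ℝ)..1, finslerF w (γ' t) ≤ finslerF w (X₁ - X₀) := by
  classical
  have hfr : ∀ x ∈ closure Ω, x ∉ Ω → x ∈ frontier Ω := by
    intro x hx hxn
    rw [hΩo.frontier_eq]
    exact ⟨hx, hxn⟩
  have hwle0 : ∀ x ∈ closure Ω, w x ≤ 0 := by
    intro x hx
    by_cases h : x ∈ Ω
    · exact (hwneg x h).le
    · exact le_of_eq (hw0 x (hfr x hx h))
  -- F is dominated by any linear functional coming from an affine minorant of w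
  have hFle : ∀ (g : EuclideanSpace ℝ (Fin d) →L[ℝ] ℝ) (c : ℝ),
      (∀ x ∈ closure Ω, g x + c ≤ w x) →
      ∀ V ∈ closure (coneOver Ω), finslerF w V ≤ -(g V.1) - c * V.2 := by
    intro g c hgc V hVmem
    obtain ⟨h2, h0, hmem⟩ := mem_closure_coneOver hΩb hVmem
    rcases h2.eq_or_lt with he | hpos
    · have hV0 : V = 0 := h0 he.symm
      rw [hV0]
      simp [finslerF]
    · have hx := hmem hpos
      have hwx := hgc _ hx
      have hgsmul : g (V.2⁻¹ • V.1) = V.2⁻¹ * g V.1 := by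
        rw [g.map_smul]; rfl
      have hVinv : V.2 * V.2⁻¹ = 1 := mul_inv_cancel₀ hpos.ne'
      have hmul : -V.2 * w (V.2⁻¹ • V.1) ≤ -V.2 * (g (V.2⁻¹ • V.1) + c) := by
        have := mul_le_mul_of_nonneg_left hwx hpos.le
        nlinarith
      calc finslerF w V = -V.2 * w (V.2⁻¹ • V.1) := rfl
        _ ≤ -V.2 * (g (V.2⁻¹ • V.1) + c) := hmul
        _ = -(g V.1) - c * V.2 := by
            rw [hgsmul]; field_simp; ring
  -- key estimate: any affine minorant of w yields an upper bound for the length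
  have hkey : ∀ (g : EuclideanSpace ℝ (Fin d) →L[ℝ] ℝ) (c : ℝ),
      (∀ x ∈ closure Ω, g x + c ≤ w x) →
      (∫ t in (0:ℝ)..1, finslerF w (γ' t)) ≤ -(g (X₁ - X₀).1) - c * (X₁ - X₀).2 := by
    intro g c hgc
    set L : (EuclideanSpace ℝ (Fin d) × ℝ) →L[ℝ] ℝ :=
      -(g.comp (ContinuousLinearMap.fst ℝ (EuclideanSpace ℝ (Fin d)) ℝ)) -
        c • (ContinuousLinearMap.snd ℝ (EuclideanSpace ℝ (Fin d)) ℝ) with hL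
    have hLapp : ∀ p : EuclideanSpace ℝ (Fin d) × ℝ, L p = -(g p.1) - c * p.2 := by
      intro p
      simp [hL, ContinuousLinearMap.sub_apply, ContinuousLinearMap.neg_apply,
        ContinuousLinearMap.smul_apply, smul_eq_mul]
    have hLderiv : ∀ t ∈ Set.Ioo (0:ℝ) 1 \ S,
        HasDerivAt (fun s => L (γ s)) (L (γ' t)) t := fun t ht =>
      (L.hasFDerivAt.comp_hasDerivAt t (hγder t ht))
    have hIcc : IntegrableOn (fun t => finslerF w (γ' t)) (Set.Icc 0 1) :=
      (intervalIntegrable_iff_integrableOn_Icc_of_le zero_le_one).1 hint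
    have hmain := integral_le_sub_of_finite_exceptions hS (fun s => L (γ s))
      (fun s => L (γ' s)) (fun t => finslerF w (γ' t)) 0 1 zero_le_one
      (L.continuous.comp_continuousOn hγcont) hLderiv hIcc
      (fun t ht => hFle g c hgc _ (hγcausal t ht) |>.trans_eq (hLapp _).symm)
    calc (∫ t in (0:ℝ)..1, finslerF w (γ' t)) ≤ L (γ 1) - L (γ 0) := hmain
      _ = L (X₁ - X₀) := by rw [hγ0, hγ1, ← L.map_sub]
      _ = -(g (X₁ - X₀).1) - c * (X₁ - X₀).2 := hLapp _
  -- compactness facts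
  have hcompact : IsCompact (closure Ω) := hΩb.isCompact_closure
  have hne : (closure Ω).Nonempty := ⟨0, subset_closure hΩ0⟩
  obtain ⟨hν0, hzero, hmem⟩ := mem_closure_coneOver hΩb hX
  rcases hν0.eq_or_lt with he | hν
  · -- X₁ = X₀
    have hX0 : X₁ - X₀ = 0 := hzero he.symm
    have hRHS : finslerF w (X₁ - X₀) = 0 := by rw [hX0]; simp [finslerF]
    obtain ⟨xm, hxm, hmin⟩ := hcompact.exists_isMinOn hne hwcont
    have h := hkey 0 (w xm) (fun x hx => by simpa using hmin hx)
    rw [hRHS]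
    rw [hX0] at h
    simpa using h
  · set ν := (X₁ - X₀).2 with hνdef
    set xs := ν⁻¹ • (X₁ - X₀).1 with hxs
    have hxscl : xs ∈ closure Ω := hmem hν
    have hV1 : (X₁ - X₀).1 = ν • xs := by
      rw [hxs, smul_smul, mul_inv_cancel₀ hν.ne', one_smul]
    have hRHS : finslerF w (X₁ - X₀) = -ν * w xs := rfl
    by_cases hxsΩ : xs ∈ Ω
    · -- interior case: subgradient
      obtain ⟨g, hg⟩ := exists_subgradient hΩo hΩc hwcont hwconv hxsΩ
      have hmin : ∀ x ∈ closure Ω, g x + (w xs - g xs) ≤ w x := by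
        intro x hx
        have := hg x hx
        linarith
      have h := hkey g (w xs - g xs) hmin
      have heq : -(g ((X₁ - X₀).1)) - (w xs - g xs) * ν = -ν * w xs := by
        rw [hV1, g.map_smul, smul_eq_mul]
        ring
      rw [hRHS]
      calc (∫ t in (0:ℝ)..1, finslerF w (γ' t))
          ≤ -(g ((X₁ - X₀).1)) - (w xs - g xs) * (X₁ - X₀).2 := h
        _ = -ν * w xs := by rw [← hνdef, heq]
    · -- boundary case
      have hwxs : w xs = 0 := hw0 xs (hfr xs hxscl hxsΩ)
      rw [hRHS, hwxs, mul_zero]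
      obtain ⟨q, hq⟩ := geometric_hahn_banach_open_point hΩc hΩo hxsΩ
      have hqcl : ∀ x ∈ closure Ω, q x ≤ q xs :=
        fun x hx => le_on_closure_of_le continuousOn_const q.continuous
          (fun y hy => (hq y hy).le) x hx
      obtain ⟨xM, hxM, hmax⟩ := hcompact.exists_isMaxOn hne hwcont.neg
      set M := -w xM with hM
      have hM0 : 0 ≤ M := by
        have h2' : -w xs ≤ -w xM := hmax hxscl
        simp only [hM]
        linarith [hwxs]
      have hstep : ∀ ε : ℝ, 0 < ε →
          (∫ t in (0:ℝ)..1, finslerF w (γ' t)) ≤ ε * ν := by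
        intro ε hε
        set T := closure Ω ∩ w ⁻¹' Set.Iic (-ε) with hT
        have hTclosed : IsClosed T :=
          hwcont.preimage_isClosed_of_isClosed isClosed_closure isClosed_Iic
        have hTcompact : IsCompact T :=
          hcompact.of_isClosed_subset hTclosed Set.inter_subset_left
        rcases Set.eq_empty_or_nonempty T with hTe | hTne
        · -- w > -ε on all of closure Ω
          have hminor : ∀ x ∈ closure Ω, (0:EuclideanSpace ℝ (Fin d) →L[ℝ] ℝ) x + (-ε) ≤ w x := by
            intro x hx
            have hx' : x ∉ T := by rw [hTe]; exact Set.notMem_empty x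
            have : ¬ w x ≤ -ε := fun h => hx' ⟨hx, h⟩
            simp only [ContinuousLinearMap.zero_apply, zero_add]
            linarith
          have h := hkey 0 (-ε) hminor
          simpa using h
        · obtain ⟨xδ, hxδ, hδmin⟩ := hTcompact.exists_isMinOn hTne
            ((continuous_const.sub q.continuous).continuousOn)
          set δ := q xs - q xδ with hδ
          have hδpos : 0 < δ := by
            by_cases hxδΩ : xδ ∈ Ω
            · simp only [hδ]; linarith [hq xδ hxδΩ]
            · exfalso
              have hwxδ : w xδ = 0 := hw0 xδ (hfr xδ hxδ.1 hxδΩ)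
              have : w xδ ≤ -ε := hxδ.2
              linarith
          set K := M / δ with hK
          have hK0 : 0 ≤ K := div_nonneg hM0 hδpos.le
          have hKδ : K * δ = M := div_mul_cancel₀ M hδpos.ne'
          have hminor : ∀ x ∈ closure Ω, (K • q) x + (-ε - K * q xs) ≤ w x := by
            intro x hx
            have happ : (K • q) x = K * q x := rfl
            rw [happ]
            by_cases hxT : x ∈ T
            · have h1 : δ ≤ q xs - q x := hδmin hxT
              have h2 : -w x ≤ M := by
                have h2' : -w x ≤ -w xM := hmax hx
                simpa only [hM] using h2'

              have h3 : K * δ ≤ K * (q xs - q x) := mul_le_mul_of_nonneg_left h1 hK0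
              nlinarith
            · have h1 : ¬ w x ≤ -ε := fun h => hxT ⟨hx, h⟩
              have h2 : 0 ≤ q xs - q x := by linarith [hqcl x hx]
              nlinarith
          have h := hkey (K • q) (-ε - K * q xs) hminor
          have happ2 : (K • q) ((X₁ - X₀).1) = K * (ν * q xs) := by
            have : (K • q) ((X₁ - X₀).1) = K * q ((X₁ - X₀).1) := rfl
            rw [this, hV1, q.map_smul, smul_eq_mul]
          calc (∫ t in (0:ℝ)..1, finslerF w (γ' t))
              ≤ -((K • q) ((X₁ - X₀).1)) - (-ε - K * q xs) * (X₁ - X₀).2 := h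
            _ = ε * ν := by rw [happ2, ← hνdef]; ring
      by_contra hcon
      push_neg at hcon
      set I := ∫ t in (0:ℝ)..1, finslerF w (γ' t) with hI
      have hIpos : 0 < I := by simpa [hI] using hcon
      have h := hstep (I / (2 * ν)) (div_pos hIpos (by linarith))
      have heq : I / (2 * ν) * ν = I / 2 := by
        field_simp
      rw [heq] at h
      linarith
end
end
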